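/- arXiv:1805.04744 — 2 statements merged into one kernel-verified Lean document; each statement's English description precedes it below -/
import Mathlib

section
/- Let β > 1 and x ∈ [0,1]. For 0 < b < 1, the lim sup of r_n(x,β)/n as n → ∞ equals b if and only if the exponent v_β(x) equals b/(1-b), where v_β(x) is the supremum of the real numbers v for which T_β^n(x) ≤ β^{-nv} holds for infinitely many positive integers n. -/
open Filter MeasureTheory Set

noncomputable def betaT (β : ℝ) (x : ℝ) : ℝ := β * x - ⌊β * x⌋

noncomputable def eps (β x : ℝ) (n : ℕ) : ℤ := ⌊β * (betaT β)^[n - 1] x⌋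

noncomputable def runLen (β x : ℝ) (n : ℕ) : ℕ :=
  sSup {j | ∃ i, i + j ≤ n ∧ ∀ k < j, eps β x (i + k + 1) = 0}

def isAdmissible (β : ℝ) (n : ℕ) (ω : ℕ → ℤ) : Prop :=
  ∃ x ∈ Set.Ico (0 : ℝ) 1, ∀ k < n, eps β x (k + 1) = ω k

def cylinder (β : ℝ) (n : ℕ) (ω : ℕ → ℤ) : Set ℝ :=
  {x | x ∈ Set.Ico (0 : ℝ) 1 ∧ ∀ k < n, eps β x (k + 1) = ω k}

def isFull (β : ℝ) (n : ℕ) (ω : ℕ → ℤ) : Prop :=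
  MeasureTheory.volume (cylinder β n ω) = ENNReal.ofReal (β ^ (-(n : ℤ)))

open Classical in
noncomputable def epsStar (β : ℝ) : ℕ → ℤ :=
  if h : ∃ m, 1 ≤ m ∧ eps β 1 m ≠ 0 ∧ ∀ k, m < k → eps β 1 k = 0 then
    fun n =>
      if (n - 1) % Nat.find h + 1 = Nat.find h then eps β 1 (Nat.find h) - 1
      else eps β 1 ((n - 1) % Nat.find h + 1)
  else eps β 1

def lexLt (u v : ℕ → ℤ) : Prop := ∃ j, (∀ k < j, u k = v k) ∧ u j < v j

def lexLe (u v : ℕ → ℤ) : Prop := lexLt u v ∨ u = v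

noncomputable def vbeta (β x : ℝ) : ℝ :=
  sSup {v | 0 ≤ v ∧ ∃ᶠ n : ℕ in atTop, (betaT β)^[n] x ≤ β ^ (-((n : ℝ) * v))}

noncomputable def hatv (β x : ℝ) : ℝ :=
  sSup {v | 0 ≤ v ∧ ∀ᶠ N : ℕ in atTop, ∃ n, 1 ≤ n ∧ n ≤ N ∧ (betaT β)^[n] x ≤ β ^ (-(v * (N : ℝ)))}

/-!
A block of `k ≥ 1` zero digits right after position `n` occurs exactly when
`T_β^n x · β^k < 1`. Hence `T_β^n x ≤ β^{-nv}` yields a zero block of length about `nv`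
ending near `n(1 + v)`, so `r_N / N ≳ v / (1 + v)` infinitely often. Conversely, if
`T_β^n x > β^{-nv}` for all large `n` and the orbit avoids `0`, a zero block starting at `i`
has length at most `vi` (up to finitely many starting points), so
`r_N ≤ v / (1 + v) · N + O(1)`. Therefore `limsup r_n / n = v_β / (1 + v_β)` when
`v_β < ∞` (and `= 1` otherwise), and `v ↦ v / (1 + v)` inverts to `b ↦ b / (1 - b)`.
-/

section Orbit

variable {β x : ℝ}

lemma iterate_betaT_nonneg (hx : 0 ≤ x) : ∀ n, 0 ≤ (betaT β)^[n] x
  | 0 => hx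
  | _ + 1 => by rw [Function.iterate_succ_apply']; exact Int.fract_nonneg _

lemma iterate_betaT_lt_one {n : ℕ} (hn : n ≠ 0) : (betaT β)^[n] x < 1 := by
  obtain ⟨m, rfl⟩ := Nat.exists_eq_succ_of_ne_zero hn
  rw [Function.iterate_succ_apply']
  exact Int.fract_lt_one _

lemma iterate_betaT_eq_zero_of_le {n m : ℕ} (h : (betaT β)^[n] x = 0) (hnm : n ≤ m) :
    (betaT β)^[m] x = 0 := by
  obtain ⟨d, rfl⟩ := Nat.exists_eq_add_of_le hnm
  rw [add_comm, Function.iterate_add_apply, h]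
  exact Function.iterate_fixed (by simp [betaT]) d

lemma eps_succ (n : ℕ) : eps β x (n + 1) = ⌊β * (betaT β)^[n] x⌋ := by
  simp [eps]

lemma iterate_betaT_add_of_eps_eq_zero {n k : ℕ} (h : ∀ j < k, eps β x (n + j + 1) = 0) :
    (betaT β)^[n + k] x = β ^ k * (betaT β)^[n] x := by
  induction k with
  | zero => simp
  | succ k ih =>
    have hk := h k k.lt_succ_self
    rw [eps_succ] at hk
    rw [← add_assoc, Function.iterate_succ_apply', betaT, hk,
      ih fun j hj => h j (hj.trans k.lt_succ_self)]
    push_cast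
    ring

lemma eps_eq_zero_of_mul_pow_lt_one (hβ : 1 ≤ β) (hx : 0 ≤ x) {n k : ℕ}
    (h : (betaT β)^[n] x * β ^ k < 1) : ∀ j < k, eps β x (n + j + 1) = 0 := by
  induction k with
  | zero => simp
  | succ k ih =>
    have ht := iterate_betaT_nonneg (β := β) hx n
    have hk := ih <| lt_of_le_of_lt
      (mul_le_mul_of_nonneg_left (pow_le_pow_right₀ hβ k.le_succ) ht) h
    intro j hj
    rcases Nat.lt_succ_iff_lt_or_eq.mp hj with hj | rfl
    · exact hk j hj
    · rw [eps_succ, iterate_betaT_add_of_eps_eq_zero hk, Int.floor_eq_zero_iff,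
        show β * (β ^ j * (betaT β)^[n] x) = (betaT β)^[n] x * β ^ (j + 1) by ring]
      exact ⟨by positivity, h⟩

lemma mul_pow_lt_one_of_eps_eq_zero {n k : ℕ} (hk : k ≠ 0)
    (h : ∀ j < k, eps β x (n + j + 1) = 0) : (betaT β)^[n] x * β ^ k < 1 := by
  rw [mul_comm, ← iterate_betaT_add_of_eps_eq_zero h]
  exact iterate_betaT_lt_one (by omega)

end Orbit

section RunLength

variable (β x : ℝ)

lemma runLen_set_bddAbove (n : ℕ) :
    BddAbove {j | ∃ i, i + j ≤ n ∧ ∀ k < j, eps β x (i + k + 1) = 0} :=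
  ⟨n, fun _ ⟨_, hi, _⟩ => by omega⟩

lemma runLen_le (n : ℕ) : runLen β x n ≤ n :=
  csSup_le ⟨0, 0, by simp⟩ fun _ ⟨_, hi, _⟩ => by omega

lemma exists_eps_eq_zero_runLen (n : ℕ) :
    ∃ i, i + runLen β x n ≤ n ∧ ∀ k < runLen β x n, eps β x (i + k + 1) = 0 :=
  Nat.sSup_mem (by exact ⟨0, 0, by simp⟩) (runLen_set_bddAbove β x n)

variable {β x}

lemma le_runLen_add_of_mul_pow_lt_one (hβ : 1 ≤ β) (hx : 0 ≤ x) {n k : ℕ}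
    (h : (betaT β)^[n] x * β ^ k < 1) : k ≤ runLen β x (n + k) :=
  le_csSup (runLen_set_bddAbove β x _) ⟨n, le_rfl, eps_eq_zero_of_mul_pow_lt_one hβ hx h⟩

end RunLength

section LimsupRatio

variable {u : ℕ → ℕ} {c K : ℝ}

lemma le_limsup_div_of_frequently (hu : ∀ N, u N ≤ N) (h : ∃ᶠ N in atTop, c * N ≤ u N + K) :
    c ≤ limsup (fun N => (u N : ℝ) / N) atTop := by
  have hbdd : IsBoundedUnder (· ≤ ·) atTop fun N => (u N : ℝ) / N :=
    isBoundedUnder_of ⟨1, fun N => div_le_one_of_le₀ (by exact_mod_cast hu N) N.cast_nonneg⟩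
  refine le_of_forall_lt_imp_le_of_dense fun a ha => le_limsup_of_frequently_le ?_ hbdd
  have hK := (tendsto_const_div_atTop_nhds_zero_nat K).eventually_lt_const (sub_pos.2 ha)
  refine (h.and_eventually (hK.and (eventually_gt_atTop 0))).mono fun N ⟨hN, hKN, hN0⟩ => ?_
  have hN0 : (0 : ℝ) < N := by exact_mod_cast hN0
  rw [le_div_iff₀ hN0]
  rw [div_lt_iff₀ hN0] at hKN
  linarith

lemma limsup_div_le_of_eventually (h : ∀ᶠ N in atTop, (u N : ℝ) ≤ c * N + K) :
    limsup (fun N => (u N : ℝ) / N) atTop ≤ c := by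
  have hcobdd : IsCoboundedUnder (· ≤ ·) atTop fun N => (u N : ℝ) / N :=
    (isBoundedUnder_of ⟨0, fun N => by positivity⟩).isCoboundedUnder_flip
  refine le_of_forall_gt_imp_ge_of_dense fun a ha => limsup_le_of_le hcobdd ?_
  have hK := (tendsto_const_div_atTop_nhds_zero_nat K).eventually_lt_const (sub_pos.2 ha)
  refine (h.and (hK.and (eventually_gt_atTop 0))).mono fun N ⟨hN, hKN, hN0⟩ => ?_
  have hN0 : (0 : ℝ) < N := by exact_mod_cast hN0
  rw [div_le_iff₀ hN0]
  rw [div_lt_iff₀ hN0] at hKN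
  linarith

end LimsupRatio

def vbetaSet (β x : ℝ) : Set ℝ :=
  {v | 0 ≤ v ∧ ∃ᶠ n : ℕ in atTop, (betaT β)^[n] x ≤ β ^ (-((n : ℝ) * v))}

section Exponent

variable {β x : ℝ}

lemma zero_mem_vbetaSet : (0 : ℝ) ∈ vbetaSet β x :=
  ⟨le_rfl, (eventually_ge_atTop 1).frequently.mono fun n hn => by
    simpa using (iterate_betaT_lt_one (by omega)).le⟩

lemma frequently_mul_le_runLen_add_one (hβ : 1 < β) (hx : 0 ≤ x) {v : ℝ} (hv : 0 < v)
    (h : ∃ᶠ n : ℕ in atTop, (betaT β)^[n] x ≤ β ^ (-((n : ℝ) * v))) :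
    ∃ᶠ N : ℕ in atTop, v / (1 + v) * N ≤ runLen β x N + 1 := by
  rw [frequently_atTop] at h ⊢
  intro M
  obtain ⟨n, hMn, hn⟩ := h (M + 1)
  have hnv : 0 < n * v := mul_pos (by exact_mod_cast (by omega : 0 < n)) hv
  -- `k` is the largest integer strictly below `n * v`
  set k := ⌈n * v⌉₊ - 1
  have hk : (k : ℝ) + 1 = ⌈n * v⌉₊ := by
    have := Nat.ceil_pos.2 hnv
    norm_cast
    omega
  have hk_lt : (k : ℝ) < n * v := by linarith [Nat.ceil_lt_add_one hnv.le]
  have hk_ge : n * v ≤ k + 1 := hk ▸ Nat.le_ceil _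
  have hsmall : (betaT β)^[n] x * β ^ k < 1 :=
    calc (betaT β)^[n] x * β ^ k ≤ β ^ (-((n : ℝ) * v)) * β ^ (k : ℝ) := by
          rw [Real.rpow_natCast]; gcongr
      _ = β ^ ((k : ℝ) - n * v) := by rw [← Real.rpow_add (by linarith)]; ring_nf
      _ < 1 := Real.rpow_lt_one_of_one_lt_of_neg hβ (by linarith)
  have hrun : (k : ℝ) ≤ runLen β x (n + k) := by
    exact_mod_cast le_runLen_add_of_mul_pow_lt_one hβ.le hx hsmall
  refine ⟨n + k, by omega, ?_⟩
  rw [div_mul_eq_mul_div, div_le_iff₀ (by linarith)]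
  push_cast
  nlinarith

lemma div_one_add_le_limsup_runLen (hβ : 1 < β) (hx : 0 ≤ x) {v : ℝ} (hv : v ∈ vbetaSet β x) :
    v / (1 + v) ≤ limsup (fun N : ℕ => (runLen β x N : ℝ) / N) atTop := by
  obtain ⟨hv0, hsmall⟩ := hv
  rcases hv0.eq_or_lt with rfl | hv0
  · simpa using le_limsup_div_of_frequently (c := 0) (K := 1) (runLen_le β x)
      (Frequently.of_forall fun N => by simp; positivity)
  · exact le_limsup_div_of_frequently (runLen_le β x)
      (frequently_mul_le_runLen_add_one hβ hx hv0 hsmall)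

lemma length_le_of_eps_eq_zero (hβ : 1 < β) {v : ℝ} (hv : 0 ≤ v) {i j : ℕ}
    (hi : β ^ (-((i : ℝ) * v)) < (betaT β)^[i] x) (hrun : ∀ l < j, eps β x (i + l + 1) = 0) :
    (j : ℝ) ≤ i * v := by
  rcases Nat.eq_zero_or_pos j with rfl | hj
  · simp only [CharP.cast_eq_zero]; positivity
  have hlt : β ^ (-((i : ℝ) * v)) * β ^ (j : ℝ) < 1 := by
    rw [Real.rpow_natCast]
    exact lt_of_le_of_lt (by gcongr) (mul_pow_lt_one_of_eps_eq_zero hj.ne' hrun)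
  rw [← Real.rpow_add (by linarith), Real.rpow_lt_one_iff_of_pos (by linarith)] at hlt
  rcases hlt with ⟨-, hlt⟩ | ⟨hβ', -⟩ <;> linarith

lemma exists_runLen_le_mul_add (hβ : 1 < β) {v : ℝ} (hv : 0 ≤ v)
    (hpos : ∀ n, 0 < (betaT β)^[n] x)
    (h : ∀ᶠ n : ℕ in atTop, β ^ (-((n : ℝ) * v)) < (betaT β)^[n] x) :
    ∃ K : ℝ, ∀ N, (runLen β x N : ℝ) ≤ v / (1 + v) * N + K := by
  obtain ⟨n₁, hn₁⟩ := eventually_atTop.1 h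
  -- a zero block of length `K` starting at `i < n₁` would force `T^i x * β ^ K < 1`
  have hbig : ∀ᶠ K : ℕ in atTop, ∀ i ∈ Finset.range n₁, 1 ≤ (betaT β)^[i] x * β ^ K :=
    (eventually_all_finset _).2 fun i _ =>
      ((tendsto_pow_atTop_atTop_of_one_lt hβ).const_mul_atTop (hpos i)).eventually_ge_atTop 1
  obtain ⟨K, hK, hK1⟩ := (hbig.and (eventually_ge_atTop 1)).exists
  refine ⟨K, fun N => ?_⟩
  obtain ⟨i, hiN, hrun⟩ := exists_eps_eq_zero_runLen β x N
  have hN : ((i + runLen β x N : ℕ) : ℝ) ≤ N := by exact_mod_cast hiN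
  push_cast at hN
  rcases lt_or_ge i n₁ with hi | hi
  · have hlt : runLen β x N < K := by
      by_contra! hKle
      have := mul_pow_lt_one_of_eps_eq_zero (n := i) (k := K) (by omega)
        fun l hl => hrun l (by omega)
      linarith [hK i (Finset.mem_range.2 hi)]
    have : (runLen β x N : ℝ) ≤ K := by exact_mod_cast hlt.le
    have : 0 ≤ v / (1 + v) * N := by positivity
    linarith
  · have hj := length_le_of_eps_eq_zero hβ hv (hn₁ i hi) hrun
    have : (runLen β x N : ℝ) ≤ v / (1 + v) * N := by
      rw [div_mul_eq_mul_div, le_div_iff₀ (by linarith)]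
      nlinarith
    have : (0 : ℝ) ≤ K := by positivity
    linarith

lemma limsup_runLen_le (hβ : 1 < β) {v : ℝ} (hv : 0 ≤ v) (hpos : ∀ n, 0 < (betaT β)^[n] x)
    (hvS : v ∉ vbetaSet β x) :
    limsup (fun N : ℕ => (runLen β x N : ℝ) / N) atTop ≤ v / (1 + v) := by
  have h : ∀ᶠ n : ℕ in atTop, β ^ (-((n : ℝ) * v)) < (betaT β)^[n] x := by
    simpa [vbetaSet, hv, not_frequently] using hvS
  obtain ⟨K, hK⟩ := exists_runLen_le_mul_add hβ hv hpos h
  exact limsup_div_le_of_eventually (Eventually.of_forall hK)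

lemma iterate_betaT_pos_of_bddAbove (hβ : 0 < β) (hx : 0 ≤ x) (hS : BddAbove (vbetaSet β x))
    (n : ℕ) : 0 < (betaT β)^[n] x := by
  refine (iterate_betaT_nonneg hx n).lt_of_ne' fun h0 => ?_
  obtain ⟨c, hc⟩ := hS
  have hmem : max c 0 + 1 ∈ vbetaSet β x :=
    ⟨by positivity, (eventually_ge_atTop n).frequently.mono fun m hm => by
      rw [iterate_betaT_eq_zero_of_le h0 hm]; positivity⟩
  linarith [hc hmem, le_max_left c 0]

lemma one_le_limsup_runLen_of_not_bddAbove (hβ : 1 < β) (hx : 0 ≤ x)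
    (hS : ¬BddAbove (vbetaSet β x)) :
    1 ≤ limsup (fun N : ℕ => (runLen β x N : ℝ) / N) atTop := by
  refine le_of_forall_lt_imp_le_of_dense fun c hc => ?_
  obtain ⟨v, hv, hcv⟩ := not_bddAbove_iff.1 hS (c / (1 - c))
  have hv0 : 0 ≤ v := hv.1
  calc c ≤ v / (1 + v) := by
        rw [div_lt_iff₀ (by linarith)] at hcv
        rw [le_div_iff₀ (by linarith)]
        linarith
    _ ≤ _ := div_one_add_le_limsup_runLen hβ hx hv

lemma limsup_runLen_eq_of_bddAbove (hβ : 1 < β) (hx : 0 ≤ x) (hS : BddAbove (vbetaSet β x)) :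
    limsup (fun N : ℕ => (runLen β x N : ℝ) / N) atTop = vbeta β x / (1 + vbeta β x) := by
  set L := limsup (fun N : ℕ => (runLen β x N : ℝ) / N) atTop
  have hs0 : 0 ≤ vbeta β x := le_csSup hS zero_mem_vbetaSet
  have hf : ContinuousOn (fun v : ℝ => v / (1 + v)) (Ici 0) :=
    continuousOn_id.div (continuousOn_const.add continuousOn_id) fun v (hv : 0 ≤ v) => by
      positivity
  apply le_antisymm
  · have hpos := iterate_betaT_pos_of_bddAbove (by linarith) hx hS
    have hf' := (hf _ hs0).mono (Ioi_subset_Ici_self.trans (Ici_subset_Ici.2 hs0))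
    refine ge_of_tendsto hf'.tendsto (eventually_nhdsWithin_of_forall fun v hv => ?_)
    exact limsup_runLen_le hβ (hs0.trans (le_of_lt hv)) hpos
      fun hvS => (not_le_of_gt hv) (le_csSup hS hvS)
  · have hsub : vbetaSet β x ⊆ Ici 0 ∩ (fun v : ℝ => v / (1 + v)) ⁻¹' Iic L :=
      fun v hv => ⟨hv.1, div_one_add_le_limsup_runLen hβ hx hv⟩
    have hclosed := hf.preimage_isClosed_of_isClosed isClosed_Ici (isClosed_Iic (a := L))
    exact (closure_minimal hsub hclosed (csSup_mem_closure ⟨0, zero_mem_vbetaSet⟩ hS)).2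

end Exponent

lemma div_one_add_eq_iff {v b : ℝ} (hv : 0 ≤ v) (hb : b < 1) :
    v / (1 + v) = b ↔ v = b / (1 - b) := by
  rw [div_eq_iff (by linarith), eq_div_iff (by linarith)]
  constructor <;> intro h <;> linarith

theorem stmt6 (β : ℝ) (hβ : 1 < β) (x : ℝ) (hx : x ∈ Set.Icc (0 : ℝ) 1)
    (b : ℝ) (hb0 : 0 < b) (hb1 : b < 1) :
    Filter.limsup (fun n : ℕ => (runLen β x n : ℝ) / n) Filter.atTop = b ↔
      vbeta β x = b / (1 - b) := by
  by_cases hS : BddAbove (vbetaSet β x)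
  · rw [limsup_runLen_eq_of_bddAbove hβ hx.1 hS]
    exact div_one_add_eq_iff (le_csSup hS zero_mem_vbetaSet) hb1
  · -- `v_β(x) = ∞` here, but `sSup` of a set unbounded above is `0` by convention
    have hv : vbeta β x = 0 := Real.sSup_of_not_bddAbove hS
    have hL := one_le_limsup_runLen_of_not_bddAbove hβ hx.1 hS
    have hw : 0 < b / (1 - b) := div_pos hb0 (by linarith)
    constructor <;> intro h <;> linarith
end

section
/- Let β > 1. If the cylinder I_n(ω) associated to the admissible word ω = (ω_1,…,ω_n) is full, then for every admissible word ω' = (ω'_1,…,ω'_m), |I_{n+m}(ω * ω')| = β^{-n}·|I_m(ω')|. -/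
/-!
On the cylinder of `ω` the map `T^n` is the affine map `f x = β^n x - c`, with `c` the
value of the word `ω` in base `β`. Hence the cylinder of `ω * ω'` is the part of the cylinder
of `ω` that `f` sends into the cylinder of `ω'`. The cylinder of `ω` always lies in
`f⁻¹' [0, 1)`, an interval of length `β^{-n}`; being full, it differs from that interval by a
null set, so the cylinder of `ω * ω'` agrees up to a null set with `f⁻¹'` of the cylinder of
`ω'`, whose measure is `β^{-n}` times that of the cylinder of `ω'`.
-/

open Filter MeasureTheory Set

noncomputable def wordValue (β : ℝ) (ω : ℕ → ℤ) : ℕ → ℝ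
  | 0 => 0
  | k + 1 => β * wordValue β ω k + ω k

lemma betaT_mem_Ico (β x : ℝ) : betaT β x ∈ Ico (0 : ℝ) 1 :=
  ⟨sub_nonneg.2 (Int.floor_le _), sub_lt_iff_lt_add'.2 (Int.lt_floor_add_one _)⟩

lemma iterate_betaT_mem_Ico (β : ℝ) {x : ℝ} (hx : x ∈ Ico (0 : ℝ) 1) :
    ∀ n : ℕ, (betaT β)^[n] x ∈ Ico (0 : ℝ) 1
  | 0 => hx
  | n + 1 => by rw [Function.iterate_succ_apply']; exact betaT_mem_Ico β _

lemma eps_add (β x : ℝ) (n k : ℕ) :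
    eps β x (n + k + 1) = eps β ((betaT β)^[n] x) (k + 1) := by
  simp only [eps, Nat.add_sub_cancel, add_comm n k, Function.iterate_add_apply]

lemma eqOn_iterate_betaT_cylinder (β : ℝ) (n : ℕ) (ω : ℕ → ℤ) :
    EqOn (betaT β)^[n] (fun x => β ^ n * x - wordValue β ω n) (cylinder β n ω) := by
  intro x hx
  induction n with
  | zero => simp [wordValue]
  | succ k ih =>
    have hdigit : ⌊β * (betaT β)^[k] x⌋ = ω k := by simpa [eps] using hx.2 k k.lt_succ_self
    rw [Function.iterate_succ_apply', betaT, hdigit,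
      ih ⟨hx.1, fun j hj => hx.2 j (Nat.lt_succ_of_lt hj)⟩, wordValue]
    ring

lemma cylinder_append (β : ℝ) (n m : ℕ) (ω ω' : ℕ → ℤ) :
    cylinder β (n + m) (fun k => if k < n then ω k else ω' (k - n)) =
      cylinder β n ω ∩ (betaT β)^[n] ⁻¹' cylinder β m ω' := by
  ext x
  simp only [_root_.cylinder, mem_inter_iff, mem_preimage, mem_ofPred_eq]
  constructor
  · rintro ⟨hx, hdigits⟩
    refine ⟨⟨hx, fun k hk => by simpa [hk] using hdigits k (by omega)⟩,
      iterate_betaT_mem_Ico β hx n, fun k hk => ?_⟩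
    simpa [← eps_add] using hdigits (n + k) (by omega)
  · rintro ⟨⟨hx, hprefix⟩, -, hsuffix⟩
    refine ⟨hx, fun k hk => ?_⟩
    by_cases hkn : k < n
    · simpa [hkn] using hprefix k hkn
    · obtain ⟨j, rfl⟩ := Nat.exists_eq_add_of_le (not_lt.1 hkn)
      simpa [eps_add] using hsuffix j (by omega)

lemma measurable_betaT (β : ℝ) : Measurable (betaT β) :=
  (measurable_id.const_mul β).sub
    ((measurable_from_top (f := (Int.cast : ℤ → ℝ))).comp (measurable_id.const_mul β).floor)

lemma measurable_eps (β : ℝ) (k : ℕ) : Measurable fun x => eps β x (k + 1) := by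
  simp only [eps, Nat.add_sub_cancel]
  exact Int.measurable_floor.comp (((measurable_betaT β).iterate k).const_mul β)

lemma measurableSet_cylinder (β : ℝ) (n : ℕ) (ω : ℕ → ℤ) :
    MeasurableSet (cylinder β n ω) := by
  have : cylinder β n ω = Ico 0 1 ∩ ⋂ k ∈ Iio n, {x | eps β x (k + 1) = ω k} := by
    ext x
    simp [_root_.cylinder]
  rw [this]
  exact measurableSet_Ico.inter <| MeasurableSet.biInter (to_countable _) fun k _ =>
    measurable_eps β k (measurableSet_singleton (ω k))

lemma volume_preimage_mul_sub {a : ℝ} (ha : a ≠ 0) (c : ℝ) (s : Set ℝ) :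
    volume ((fun x => a * x - c) ⁻¹' s) = ENNReal.ofReal |a⁻¹| * volume s := by
  have : (fun x => a * x - c) ⁻¹' s = (a * ·) ⁻¹' ((· + -c) ⁻¹' s) := by
    ext x
    simp [sub_eq_add_neg]
  rw [this, Real.volume_preimage_mul_left ha, measure_preimage_add_right]

theorem stmt14_general (β : ℝ) (hβ : 1 < β) (n m : ℕ) (ω ω' : ℕ → ℤ)
    (hfull : isFull β n ω) :
    MeasureTheory.volume (cylinder β (n + m) (fun k => if k < n then ω k else ω' (k - n))) =
      ENNReal.ofReal (β ^ (-(n : ℤ))) * MeasureTheory.volume (cylinder β m ω') := by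
  set f : ℝ → ℝ := fun x => β ^ n * x - wordValue β ω n
  have hβn : β ^ n ≠ 0 := pow_ne_zero n (by linarith)
  have hscale : ∀ s, volume (f ⁻¹' s) = ENNReal.ofReal (β ^ (-(n : ℤ))) * volume s := by
    intro s
    rw [volume_preimage_mul_sub hβn, zpow_neg, zpow_natCast,
      abs_of_pos (inv_pos.2 (pow_pos (by linarith) n))]
  have hcyl_ae : cylinder β n ω =ᵐ[volume] f ⁻¹' Ico 0 1 := by
    refine ae_eq_of_subset_of_measure_ge (fun x hx => ?_) ?_
      (measurableSet_cylinder β n ω).nullMeasurableSet ?_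
    · simpa [f, ← eqOn_iterate_betaT_cylinder β n ω hx] using iterate_betaT_mem_Ico β hx.1 n
    · rw [show volume (cylinder β n ω) = _ from hfull, hscale]
      simp
    · simp [hscale]
  calc volume (cylinder β (n + m) (fun k => if k < n then ω k else ω' (k - n)))
      = volume (cylinder β n ω ∩ f ⁻¹' cylinder β m ω') := by
        rw [cylinder_append, (eqOn_iterate_betaT_cylinder β n ω).inter_preimage_eq]
    _ = volume (f ⁻¹' Ico 0 1 ∩ f ⁻¹' cylinder β m ω') :=
        measure_congr (hcyl_ae.inter (ae_eq_refl _))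
    _ = ENNReal.ofReal (β ^ (-(n : ℤ))) * volume (cylinder β m ω') := by
        rw [← preimage_inter, inter_eq_right.2 fun _ hx => hx.1, hscale]

theorem stmt14 (β : ℝ) (hβ : 1 < β) (n m : ℕ) (ω ω' : ℕ → ℤ)
    (hadm : isAdmissible β n ω) (hfull : isFull β n ω) (hadm' : isAdmissible β m ω') :
    MeasureTheory.volume (cylinder β (n + m) (fun k => if k < n then ω k else ω' (k - n))) =
      ENNReal.ofReal (β ^ (-(n : ℤ))) * MeasureTheory.volume (cylinder β m ω') :=
  stmt14_general β hβ n m ω ω' hfull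
end
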